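/- For $\rho \in (0,1)$ and positive integers $M, N$, we have $-1 + \sum_{u=0}^{M} \sum_{t=0}^{N} \rho^{\sqrt{t^2+u^2}} \leq \frac{2\rho}{1-\rho} + \frac{\pi}{2}\left(\frac{1}{\log \rho}\right)^2$. -/

import Mathlib

open Finset Real MeasureTheory intervalIntegral Set

lemma aux_int_sqrt_one_sub_sq : ∫ x in (0:ℝ)..1, Real.sqrt (1 - x ^ 2) = π / 4 := by
  have h := integral_sqrt_one_sub_sq
  have hsplit : ∫ x in (-1:ℝ)..1, Real.sqrt (1 - x ^ 2)
      = (∫ x in (-1:ℝ)..0, Real.sqrt (1 - x ^ 2)) + ∫ x in (0:ℝ)..1, Real.sqrt (1 - x ^ 2) := by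
    rw [intervalIntegral.integral_add_adjacent_intervals] <;>
      exact (Real.continuous_sqrt.comp (by continuity)).intervalIntegrable _ _
  have hneg : (∫ x in (-1:ℝ)..0, Real.sqrt (1 - x ^ 2)) = ∫ x in (0:ℝ)..1, Real.sqrt (1 - x ^ 2) := by
    have h2 := intervalIntegral.integral_comp_neg (a := (0:ℝ)) (b := 1)
      (fun x => Real.sqrt (1 - x ^ 2))
    simp only [neg_sq, neg_zero] at h2
    rw [← h2]
  rw [hsplit, hneg] at h
  linarith

lemma aux_int_sqrt_sub_sq {v : ℝ} (hv : 0 ≤ v) :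
    ∫ x in (0:ℝ)..v, Real.sqrt (v ^ 2 - x ^ 2) = π / 4 * v ^ 2 := by
  rcases eq_or_lt_of_le hv with h | h
  · simp [← h]
  · have hne : v ≠ 0 := ne_of_gt h
    have key : ∀ x : ℝ, Real.sqrt (v ^ 2 - x ^ 2) = v * Real.sqrt (1 - (x / v) ^ 2) := by
      intro x
      rw [show v ^ 2 - x ^ 2 = v ^ 2 * (1 - (x / v) ^ 2) by field_simp,
        Real.sqrt_mul (sq_nonneg v), Real.sqrt_sq hv]
    simp_rw [key]
    rw [intervalIntegral.integral_const_mul,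
      intervalIntegral.integral_comp_div (fun x => Real.sqrt (1 - x ^ 2)) hne,
      zero_div, div_self hne, aux_int_sqrt_one_sub_sq]
    simp [smul_eq_mul]
    ring

lemma aux_count (M N : ℕ) {v : ℝ} (hv : 0 ≤ v) :
    ∑ u ∈ Finset.range M, ∑ t ∈ Finset.range N,
      (if Real.sqrt (((t:ℝ)+1)^2 + ((u:ℝ)+1)^2) ≤ v then (1:ℝ) else 0)
    ≤ π / 4 * v ^ 2 := by
  have hcont : Continuous (fun x : ℝ => Real.sqrt (v ^ 2 - x ^ 2)) :=
    Real.continuous_sqrt.comp (by continuity)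
  have inner : ∀ u : ℕ, ∑ t ∈ Finset.range N,
      (if Real.sqrt (((t:ℝ)+1)^2 + ((u:ℝ)+1)^2) ≤ v then (1:ℝ) else 0)
      ≤ Real.sqrt (v ^ 2 - ((u:ℝ)+1) ^ 2) := by
    intro u
    set s := Real.sqrt (v ^ 2 - ((u:ℝ)+1) ^ 2) with hs
    rw [Finset.sum_boole]
    have hsub : (Finset.range N).filter
        (fun t : ℕ => Real.sqrt (((t:ℝ)+1)^2 + ((u:ℝ)+1)^2) ≤ v) ⊆ Finset.range (Nat.floor s) := by
      intro t ht
      rw [Finset.mem_filter] at ht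
      obtain ⟨-, h⟩ := ht
      have h2 : ((t:ℝ)+1)^2 + ((u:ℝ)+1)^2 ≤ v ^ 2 := by
        have := Real.sq_sqrt (by positivity : (0:ℝ) ≤ ((t:ℝ)+1)^2 + ((u:ℝ)+1)^2)
        nlinarith [Real.sqrt_nonneg (((t:ℝ)+1)^2 + ((u:ℝ)+1)^2)]
      have h3 : ((t:ℝ)+1) ≤ s := by
        rw [hs, show ((t:ℝ)+1) = ((t+1 : ℕ) : ℝ) by push_cast; ring]
        apply Real.le_sqrt_of_sq_le
        push_cast
        nlinarith
      have h4 : (t+1 : ℕ) ≤ Nat.floor s := by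
        apply Nat.le_floor
        push_cast
        linarith
      simpa [Finset.mem_range] using h4
    calc ((Finset.range N).filter _).card
        ≤ ((Finset.range (Nat.floor s)).card : ℝ) := by
          exact_mod_cast Finset.card_le_card hsub
      _ ≤ s := by simpa using Nat.floor_le (Real.sqrt_nonneg _)
  have step2 : ∑ u ∈ Finset.range M, Real.sqrt (v ^ 2 - ((u:ℝ)+1) ^ 2)
      ≤ ∫ x in (0:ℝ)..(0+(M:ℕ)), Real.sqrt (v ^ 2 - x ^ 2) := by
    have hanti : AntitoneOn (fun x : ℝ => Real.sqrt (v ^ 2 - x ^ 2))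
        (Set.Icc (0:ℝ) (0 + (M:ℕ))) := by
      intro x hx y hy hxy
      apply Real.sqrt_le_sqrt
      have := hx.1
      nlinarith
    have := hanti.sum_le_integral
    refine le_trans (le_of_eq ?_) this
    apply Finset.sum_congr rfl
    intro u _
    push_cast
    ring_nf
  have step3 : (∫ x in (0:ℝ)..(0+(M:ℕ)), Real.sqrt (v ^ 2 - x ^ 2)) ≤ π / 4 * v ^ 2 := by
    rw [zero_add]
    rcases le_total (M:ℝ) v with h | h
    · have hsplit : (∫ x in (0:ℝ)..v, Real.sqrt (v ^ 2 - x ^ 2))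
          = (∫ x in (0:ℝ)..(M:ℝ), Real.sqrt (v ^ 2 - x ^ 2))
            + ∫ x in (M:ℝ)..v, Real.sqrt (v ^ 2 - x ^ 2) := by
        rw [intervalIntegral.integral_add_adjacent_intervals] <;>
          exact hcont.intervalIntegrable _ _
      have hnn : 0 ≤ ∫ x in (M:ℝ)..v, Real.sqrt (v ^ 2 - x ^ 2) :=
        intervalIntegral.integral_nonneg h (fun x _ => Real.sqrt_nonneg _)
      rw [← aux_int_sqrt_sub_sq hv]
      linarith [hsplit]
    · have hsplit : (∫ x in (0:ℝ)..(M:ℝ), Real.sqrt (v ^ 2 - x ^ 2))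
          = (∫ x in (0:ℝ)..v, Real.sqrt (v ^ 2 - x ^ 2))
            + ∫ x in v..(M:ℝ), Real.sqrt (v ^ 2 - x ^ 2) := by
        rw [intervalIntegral.integral_add_adjacent_intervals] <;>
          exact hcont.intervalIntegrable _ _
      have hzero : (∫ x in v..(M:ℝ), Real.sqrt (v ^ 2 - x ^ 2)) = 0 := by
        rw [intervalIntegral.integral_congr (g := fun _ => (0:ℝ)), intervalIntegral.integral_zero]
        intro x hx
        rw [Set.uIcc_of_le h] at hx
        have hxv := hx.1
        simp only
        rw [Real.sqrt_eq_zero']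
        nlinarith
      rw [hsplit, hzero, add_zero, aux_int_sqrt_sub_sq hv]
  calc _ ≤ ∑ u ∈ Finset.range M, Real.sqrt (v ^ 2 - ((u:ℝ)+1) ^ 2) :=
        Finset.sum_le_sum fun u _ => inner u
    _ ≤ _ := step2.trans step3

noncomputable def auxF (c : ℝ) (u t : ℕ) : ℝ → ℝ := fun v =>
  (Set.Ici (Real.sqrt (((t:ℝ)+1)^2 + ((u:ℝ)+1)^2))).indicator
    (fun v => Real.exp (-(c * v))) v

lemma aux_S {c : ℝ} (hc : 0 < c) (M N : ℕ) :
    ∑ u ∈ Finset.range M, ∑ t ∈ Finset.range N,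
      Real.exp (-(c * Real.sqrt (((t:ℝ)+1)^2 + ((u:ℝ)+1)^2)))
    ≤ π / (2 * c ^ 2) := by
  have hf : ∀ u t : ℕ, auxF c u t = fun v =>
      (Set.Ici (Real.sqrt (((t:ℝ)+1)^2 + ((u:ℝ)+1)^2))).indicator
        (fun v => Real.exp (-(c * v))) v := fun u t => rfl
  have hexpint : IntegrableOn (fun v : ℝ => Real.exp (-(c * v))) (Set.Ioi (0:ℝ)) :=
    by simpa [neg_mul] using exp_neg_integrableOn_Ioi 0 hc
  have hint : ∀ u t : ℕ, Integrable (auxF c u t) (volume.restrict (Set.Ioi (0:ℝ))) := by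
    intro u t
    exact MeasureTheory.Integrable.indicator hexpint measurableSet_Ici
  have hrpos : ∀ u t : ℕ, (0:ℝ) < Real.sqrt (((t:ℝ)+1)^2 + ((u:ℝ)+1)^2) := by
    intro u t
    apply Real.sqrt_pos.mpr
    positivity
  have hterm : ∀ u t : ℕ,
      Real.exp (-(c * Real.sqrt (((t:ℝ)+1)^2 + ((u:ℝ)+1)^2)))
        = c * ∫ v in Set.Ioi (0:ℝ), auxF c u t v := by
    intro u t
    set r := Real.sqrt (((t:ℝ)+1)^2 + ((u:ℝ)+1)^2) with hr
    have h1 : (∫ v in Set.Ioi (0:ℝ), auxF c u t v) = ∫ v in Set.Ici r, Real.exp (-(c * v)) := by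
      rw [hf u t]
      rw [MeasureTheory.setIntegral_indicator measurableSet_Ici,
        Set.inter_eq_self_of_subset_right (Set.Ici_subset_Ioi.mpr (hrpos u t))]
    have h2 : (∫ v in Set.Ici r, Real.exp (-(c * v))) = c⁻¹ * Real.exp (-(c * r)) := by
      rw [MeasureTheory.integral_Ici_eq_integral_Ioi]
      have := integral_comp_mul_left_Ioi (fun x => Real.exp (-x)) r hc
      simp only [smul_eq_mul] at this
      rw [this, integral_exp_neg_Ioi]
    rw [h1, h2]
    field_simp
  have hswap : ∑ u ∈ Finset.range M, ∑ t ∈ Finset.range N, (∫ v in Set.Ioi (0:ℝ), auxF c u t v)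
      = ∫ v in Set.Ioi (0:ℝ), ∑ u ∈ Finset.range M, ∑ t ∈ Finset.range N, auxF c u t v := by
    calc ∑ u ∈ Finset.range M, ∑ t ∈ Finset.range N, (∫ v in Set.Ioi (0:ℝ), auxF c u t v)
        = ∑ u ∈ Finset.range M, ∫ v in Set.Ioi (0:ℝ), ∑ t ∈ Finset.range N, auxF c u t v :=
          Finset.sum_congr rfl fun u _ =>
            (MeasureTheory.integral_finset_sum _ (fun t _ => hint u t)).symm
      _ = ∫ v in Set.Ioi (0:ℝ), ∑ u ∈ Finset.range M, ∑ t ∈ Finset.range N, auxF c u t v :=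
          (MeasureTheory.integral_finset_sum _ (fun u _ =>
            MeasureTheory.integrable_finset_sum _ (fun t _ => hint u t))).symm
  have hmono : (∫ v in Set.Ioi (0:ℝ), ∑ u ∈ Finset.range M, ∑ t ∈ Finset.range N, auxF c u t v)
      ≤ ∫ v in Set.Ioi (0:ℝ), π / 4 * (v ^ 2 * Real.exp (-(c * v))) := by
    have hG : IntegrableOn (fun v : ℝ => π / 4 * (v ^ 2 * Real.exp (-(c * v)))) (Set.Ioi 0) := by
      apply Integrable.const_mul
      have := integrableOn_rpow_mul_exp_neg_mul_rpow (by norm_num : (-1:ℝ) < 2)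
        (zero_lt_one : (0:ℝ) < 1) hc
      have heq : (fun x : ℝ => x ^ (2:ℝ) * Real.exp (-c * x ^ (1:ℝ)))
          = fun x : ℝ => x ^ 2 * Real.exp (-(c * x)) := by
        funext x
        rw [Real.rpow_one, neg_mul, show (2:ℝ) = ((2:ℕ):ℝ) by norm_num, Real.rpow_natCast]
      rwa [heq] at this
    apply MeasureTheory.setIntegral_mono_on
    · exact MeasureTheory.integrable_finset_sum _ (fun u _ =>
        MeasureTheory.integrable_finset_sum _ (fun t _ => hint u t))
    · exact hG
    · exact measurableSet_Ioi
    · intro v hv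
      have hv0 : (0:ℝ) ≤ v := le_of_lt hv
      have : ∀ u t : ℕ, auxF c u t v = Real.exp (-(c * v)) *
          (if Real.sqrt (((t:ℝ)+1)^2 + ((u:ℝ)+1)^2) ≤ v then (1:ℝ) else 0) := by
        intro u t
        rw [hf u t]
        simp only [Set.indicator_apply, Set.mem_Ici]
        split <;> simp
      simp_rw [this, ← Finset.mul_sum]
      calc Real.exp (-(c * v)) * ∑ u ∈ Finset.range M, ∑ t ∈ Finset.range N,
            (if Real.sqrt (((t:ℝ)+1)^2 + ((u:ℝ)+1)^2) ≤ v then (1:ℝ) else 0)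
          ≤ Real.exp (-(c * v)) * (π / 4 * v ^ 2) := by
            apply mul_le_mul_of_nonneg_left (aux_count M N hv0) (Real.exp_nonneg _)
        _ = π / 4 * (v ^ 2 * Real.exp (-(c * v))) := by ring
  have hval : (∫ v in Set.Ioi (0:ℝ), π / 4 * (v ^ 2 * Real.exp (-(c * v))))
      = π / 4 * (2 / c ^ 3) := by
    rw [MeasureTheory.integral_const_mul]
    congr 1
    have := integral_rpow_mul_exp_neg_mul_rpow (by norm_num : (0:ℝ) < 1)
      (by norm_num : (-1:ℝ) < 2) hc
    have heq : (fun x : ℝ => x ^ (2:ℝ) * Real.exp (-c * x ^ (1:ℝ)))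
        = fun x : ℝ => x ^ 2 * Real.exp (-(c * x)) := by
      funext x
      rw [Real.rpow_one, neg_mul, show (2:ℝ) = ((2:ℕ):ℝ) by norm_num, Real.rpow_natCast]
    rw [heq] at this
    rw [this]
    have hG3 : Real.Gamma ((2 + 1) / 1 : ℝ) = 2 := by
      rw [show ((2 + 1) / 1 : ℝ) = ((2:ℕ):ℝ) + 1 by norm_num, Real.Gamma_nat_eq_factorial]
      norm_num
    rw [hG3]
    rw [show (-(2 + 1) / 1 : ℝ) = -((3:ℕ):ℝ) by norm_num, Real.rpow_neg hc.le,
      Real.rpow_natCast]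
    field_simp
  calc ∑ u ∈ Finset.range M, ∑ t ∈ Finset.range N,
        Real.exp (-(c * Real.sqrt (((t:ℝ)+1)^2 + ((u:ℝ)+1)^2)))
      = c * ∫ v in Set.Ioi (0:ℝ), ∑ u ∈ Finset.range M, ∑ t ∈ Finset.range N, auxF c u t v := by
        rw [← hswap, Finset.mul_sum]
        apply Finset.sum_congr rfl
        intro u _
        rw [Finset.mul_sum]
        exact Finset.sum_congr rfl fun t _ => hterm u t
    _ ≤ c * (π / 4 * (2 / c ^ 3)) := by
        rw [← hval]
        exact mul_le_mul_of_nonneg_left hmono hc.le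
    _ = π / (2 * c ^ 2) := by field_simp; ring

/-- For `ρ ∈ (0,1)` and positive integers `M, N`,
`-1 + ∑_{u=0}^{M} ∑_{t=0}^{N} ρ^{√(t²+u²)} ≤ 2ρ/(1-ρ) + (π/2)(1/log ρ)²`. -/
theorem geom_double_sum_l2_bound (ρ : ℝ) (hρ : 0 < ρ) (hρ' : ρ < 1)
    (M N : ℕ) (hM : 0 < M) (hN : 0 < N) :
    -1 + ∑ u ∈ range (M + 1), ∑ t ∈ range (N + 1),
        ρ ^ (Real.sqrt ((t : ℝ) ^ 2 + (u : ℝ) ^ 2))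
      ≤ 2 * ρ / (1 - ρ) + (π / 2) * (1 / Real.log ρ) ^ 2 := by
  have hlog : Real.log ρ < 0 := Real.log_neg hρ hρ'
  set c : ℝ := -Real.log ρ with hcdef
  have hc : 0 < c := by simp [hcdef]; linarith
  have h1ρ : (0:ℝ) < 1 - ρ := by linarith
  have hrpow : ∀ x : ℝ, ρ ^ x = Real.exp (-(c * x)) := by
    intro x
    rw [Real.rpow_def_of_pos hρ]
    congr 1
    rw [hcdef]; ring
  have geo : ∀ n : ℕ, ∑ t ∈ range n, ρ ^ (((t:ℝ)+1)) ≤ ρ / (1 - ρ) := by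
    intro n
    have hm : ∀ t : ℕ, ρ ^ (((t:ℝ)+1)) = ρ * ρ ^ t := by
      intro t
      rw [show ((t:ℝ)+1) = ((t+1:ℕ):ℝ) by push_cast; ring, Real.rpow_natCast, pow_succ]
      ring
    simp_rw [hm, ← Finset.mul_sum]
    rw [div_eq_mul_inv]
    apply mul_le_mul_of_nonneg_left _ hρ.le
    rw [geom_sum_eq (ne_of_lt hρ') n]
    rw [show (ρ ^ n - 1) / (ρ - 1) = (1 - ρ ^ n) / (1 - ρ) by
      rw [← neg_div_neg_eq]; ring_nf, inv_eq_one_div]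
    gcongr
    · linarith [pow_nonneg hρ.le n]
  have inner_split : ∀ (y : ℝ), 0 ≤ y →
      ∑ t ∈ range (N + 1), ρ ^ (Real.sqrt ((t : ℝ) ^ 2 + y ^ 2))
      = (∑ t ∈ range N, ρ ^ (Real.sqrt (((t:ℝ)+1) ^ 2 + y ^ 2))) + ρ ^ y := by
    intro y hy
    rw [Finset.sum_range_succ']
    congr 1
    · apply Finset.sum_congr rfl
      intro t _
      congr 2
      push_cast
      ring
    · norm_num [Real.sqrt_sq hy]
  have key : ∑ u ∈ range (M + 1), ∑ t ∈ range (N + 1),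
        ρ ^ (Real.sqrt ((t : ℝ) ^ 2 + (u : ℝ) ^ 2))
      = (∑ u ∈ range M, ∑ t ∈ range N,
          ρ ^ (Real.sqrt (((t:ℝ)+1) ^ 2 + ((u:ℝ)+1) ^ 2)))
        + (∑ u ∈ range M, ρ ^ (((u:ℝ)+1)))
        + ((∑ t ∈ range N, ρ ^ (((t:ℝ)+1))) + 1) := by
    have step1 : ∀ u : ℕ, ∑ t ∈ range (N + 1),
        ρ ^ (Real.sqrt ((t : ℝ) ^ 2 + (u : ℝ) ^ 2))
        = (∑ t ∈ range N, ρ ^ (Real.sqrt (((t:ℝ)+1) ^ 2 + ((u:ℝ)) ^ 2))) + ρ ^ ((u:ℝ)) := by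
      intro u
      exact inner_split (u:ℝ) (by positivity)
    rw [Finset.sum_congr rfl fun u _ => step1 u, Finset.sum_range_succ']
    congr 1
    · rw [← Finset.sum_add_distrib]
      apply Finset.sum_congr rfl
      intro u _
      push_cast
      rfl
    · norm_num
      apply Finset.sum_congr rfl
      intro t _
      congr 2
      rw [Real.sqrt_sq (by positivity)]
  rw [key]
  have hS : (∑ u ∈ range M, ∑ t ∈ range N,
        ρ ^ (Real.sqrt (((t:ℝ)+1) ^ 2 + ((u:ℝ)+1) ^ 2))) ≤ π / (2 * c ^ 2) := by
    calc (∑ u ∈ range M, ∑ t ∈ range N,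
          ρ ^ (Real.sqrt (((t:ℝ)+1) ^ 2 + ((u:ℝ)+1) ^ 2)))
        = ∑ u ∈ Finset.range M, ∑ t ∈ Finset.range N,
          Real.exp (-(c * Real.sqrt (((t:ℝ)+1)^2 + ((u:ℝ)+1)^2))) := by
          apply Finset.sum_congr rfl
          intro u _
          apply Finset.sum_congr rfl
          intro t _
          exact hrpow _
      _ ≤ π / (2 * c ^ 2) := aux_S hc M N
  have hfin : π / (2 * c ^ 2) = (π / 2) * (1 / Real.log ρ) ^ 2 := by
    rw [hcdef]
    rw [div_pow, one_pow, neg_pow]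
    field_simp
  have hA := geo N
  have hB := geo M
  rw [← hfin]
  have h2 : 2 * ρ / (1 - ρ) = ρ / (1 - ρ) + ρ / (1 - ρ) := by ring
  rw [h2]
  linarith [hS]
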